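/- Let Γ be a group generated by a finite symmetric set S, h ∈ Γ, and C = C_Γ(h). Define the coset length |gC| = min{|gc| : c ∈ C} and the Schreier ball B̄_n = {gC : |gC| ≤ n}. Then for every n ∈ ℕ, the cardinality of B̄_n is at most the cardinality of Cl(h) ∩ B_{2n+|h|}. -/

import Mathlib

def wordBall {Γ : Type*} [Group Γ] (S : Set Γ) (n : ℕ) : Set Γ :=
  {g | ∃ l : List Γ, l.length ≤ n ∧ (∀ x ∈ l, x ∈ S) ∧ l.prod = g}

noncomputable def wlen {Γ : Type*} [Group Γ] (S : Set Γ) (g : Γ) : ℕ :=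
  sInf {n | g ∈ wordBall S n}

def conjClass {Γ : Type*} [Group Γ] (h : Γ) : Set Γ := {y | ∃ g : Γ, g⁻¹ * h * g = y}

/-- The length of a coset: the minimal word length of a representative. -/
noncomputable def cosetLen {Γ : Type*} [Group Γ] (S : Set Γ) (C : Subgroup Γ)
    (x : Γ ⧸ C) : ℕ :=
  sInf {n | ∃ g : Γ, (QuotientGroup.mk g : Γ ⧸ C) = x ∧ wlen S g ≤ n}

/-- The Schreier ball of radius `n` in `Γ/C`. -/
def schreierBall {Γ : Type*} [Group Γ] (S : Set Γ) (C : Subgroup Γ) (n : ℕ) :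
    Set (Γ ⧸ C) := {x | cosetLen S C x ≤ n}

section Aux
variable {Γ : Type*} [Group Γ] {S : Set Γ}

lemma aux_exists_word (hsym : S⁻¹ = S) (hgen : Subgroup.closure S = ⊤) (g : Γ) :
    ∃ n, g ∈ wordBall S n := by
  have hg : g ∈ (Subgroup.closure S).toSubmonoid := by rw [hgen]; trivial
  rw [Subgroup.closure_toSubmonoid, hsym, Set.union_self] at hg
  obtain ⟨l, hl, hp⟩ := Submonoid.exists_list_of_mem_closure hg
  exact ⟨l.length, l, le_rfl, hl, hp⟩

lemma aux_mem_wordBall_wlen (hsym : S⁻¹ = S) (hgen : Subgroup.closure S = ⊤) (g : Γ) :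
    g ∈ wordBall S (wlen S g) :=
  Nat.sInf_mem (aux_exists_word hsym hgen g)

lemma aux_wlen_le {g : Γ} {n : ℕ} (hg : g ∈ wordBall S n) : wlen S g ≤ n :=
  Nat.sInf_le hg

lemma aux_mul_mem {a b : Γ} {m n : ℕ} (ha : a ∈ wordBall S m) (hb : b ∈ wordBall S n) :
    a * b ∈ wordBall S (m + n) := by
  obtain ⟨l₁, hl₁, hS₁, hp₁⟩ := ha
  obtain ⟨l₂, hl₂, hS₂, hp₂⟩ := hb
  refine ⟨l₁ ++ l₂, by simpa using Nat.add_le_add hl₁ hl₂, ?_, by simp [hp₁, hp₂]⟩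
  intro x hx
  rcases List.mem_append.mp hx with hx | hx
  · exact hS₁ x hx
  · exact hS₂ x hx

lemma aux_inv_mem (hsym : S⁻¹ = S) {g : Γ} {n : ℕ} (hg : g ∈ wordBall S n) :
    g⁻¹ ∈ wordBall S n := by
  obtain ⟨l, hl, hS, hp⟩ := hg
  refine ⟨(l.map fun x => x⁻¹).reverse, by simpa using hl, ?_, by
    rw [← List.prod_inv_reverse, hp]⟩
  intro x hx
  simp only [List.mem_reverse, List.mem_map] at hx
  obtain ⟨y, hy, rfl⟩ := hx
  rw [← hsym]
  simpa using hS y hy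

lemma aux_wordBall_finite (hfin : S.Finite) : ∀ n, (wordBall S n).Finite := by
  intro n
  induction n with
  | zero =>
    refine Set.Finite.subset (Set.finite_singleton (1 : Γ)) ?_
    rintro g ⟨l, hl, -, hp⟩
    rw [Nat.le_zero, List.length_eq_zero_iff] at hl
    simp [hl] at hp
    simp [← hp]
  | succ n ih =>
    refine Set.Finite.subset (ih.union (Set.Finite.image2 (· * ·) hfin ih)) ?_
    rintro g ⟨l, hl, hS, hp⟩
    cases l with
    | nil => exact Or.inl ⟨[], by simp, by simp, hp⟩
    | cons a l =>
      right
      refine Set.mem_image2.mpr ⟨a, hS a List.mem_cons_self, l.prod,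
        ⟨l, by simpa using Nat.succ_le_succ_iff.mp hl, fun x hx => hS x (List.mem_cons_of_mem a hx), rfl⟩, ?_⟩
      simpa using hp

lemma aux_exists_rep (hsym : S⁻¹ = S) (hgen : Subgroup.closure S = ⊤)
    (C : Subgroup Γ) (x : Γ ⧸ C) :
    ∃ g : Γ, (QuotientGroup.mk g : Γ ⧸ C) = x ∧ wlen S g ≤ cosetLen S C x := by
  have hne : {n | ∃ g : Γ, (QuotientGroup.mk g : Γ ⧸ C) = x ∧ wlen S g ≤ n}.Nonempty := by
    obtain ⟨g, hg⟩ := QuotientGroup.mk_surjective x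
    exact ⟨wlen S g, g, hg, le_rfl⟩
  exact Nat.sInf_mem hne

/-- The conjugation map on the quotient by the centralizer. -/
noncomputable def conjMap {Γ : Type*} [Group Γ] (h : Γ) :
    Γ ⧸ Subgroup.centralizer {h} → Γ :=
  fun x => Quotient.liftOn' x (fun g => g * h * g⁻¹) (by
    intro a b hab
    rw [QuotientGroup.leftRel_apply] at hab
    have hc := Subgroup.mem_centralizer_iff.mp hab h rfl
    -- hc : h * (a⁻¹ * b) = (a⁻¹ * b) * h
    have : a * (h * (a⁻¹ * b)) * b⁻¹ = a * ((a⁻¹ * b) * h) * b⁻¹ := by rw [hc]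
    calc a * h * a⁻¹ = a * (h * (a⁻¹ * b)) * b⁻¹ := by group
    _ = a * ((a⁻¹ * b) * h) * b⁻¹ := this
    _ = b * h * b⁻¹ := by group)

lemma conjMap_mk {Γ : Type*} [Group Γ] (h g : Γ) :
    conjMap h (QuotientGroup.mk g) = g * h * g⁻¹ := rfl

end Aux

/-- The Schreier ball of radius `n` in `Γ/C_Γ(h)` has cardinality at most that of
`Cl(h) ∩ B_{2n+|h|}`. -/
theorem stmt2 (Γ : Type*) [Group Γ] (S : Set Γ) (hfin : S.Finite) (hsym : S⁻¹ = S)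
    (hgen : Subgroup.closure S = ⊤) (h : Γ) :
    ∀ n : ℕ,
      (schreierBall S (Subgroup.centralizer {h}) n).ncard ≤
        (conjClass h ∩ wordBall S (2 * n + wlen S h)).ncard := by
  intro n
  refine Set.ncard_le_ncard_of_injOn (conjMap h) ?_ ?_
    ((aux_wordBall_finite hfin (2 * n + wlen S h)).inter_of_right _)
  · intro x hx
    obtain ⟨g, hg, hlen⟩ := aux_exists_rep hsym hgen (Subgroup.centralizer {h}) x
    have hxn : wlen S g ≤ n := hlen.trans hx
    rw [← hg, conjMap_mk]
    constructor
    · exact ⟨g⁻¹, by group⟩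
    · have h1 : g ∈ wordBall S n :=
        Set.mem_of_mem_of_subset (aux_mem_wordBall_wlen hsym hgen g)
          (fun y ⟨l, hl, hS, hp⟩ => ⟨l, hl.trans hxn, hS, hp⟩)
      have h2 := aux_mem_wordBall_wlen hsym hgen h
      have h3 := aux_inv_mem hsym h1
      have := aux_mul_mem (aux_mul_mem h1 h2) h3
      have heq : n + wlen S h + n = 2 * n + wlen S h := by ring
      rwa [heq] at this
  · intro x hx y hy hxy
    obtain ⟨a, rfl⟩ := QuotientGroup.mk_surjective x
    obtain ⟨b, rfl⟩ := QuotientGroup.mk_surjective y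
    rw [conjMap_mk, conjMap_mk] at hxy
    rw [QuotientGroup.eq]
    refine Subgroup.mem_centralizer_iff.mpr ?_
    rintro z rfl
    -- show z * (a⁻¹ * b) = (a⁻¹ * b) * z from a * z * a⁻¹ = b * z * b⁻¹
    have : a⁻¹ * (a * z * a⁻¹) * b = a⁻¹ * (b * z * b⁻¹) * b := by rw [hxy]
    calc z * (a⁻¹ * b) = a⁻¹ * (a * z * a⁻¹) * b := by group
    _ = a⁻¹ * (b * z * b⁻¹) * b := this
    _ = (a⁻¹ * b) * z := by group
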